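/- For a random vector (X₁,...,X_d) with continuous marginal CDFs F₁,...,F_d and joint CDF H, the function C defined on [0,1]^d by C(u₁,...,u_d) = P(F₁(X₁) ≤ u₁, ..., F_d(X_d) ≤ u_d) satisfies H(x₁,...,x_d) = C(F₁(x₁),...,F_d(x_d)) for all (x₁,...,x_d) ∈ ℝ^d. -/

import Mathlib

/-!
Monotonicity of `F i` gives `{X i ≤ x i} ⊆ {F i (X i) ≤ F i (x i)}`. Continuity makes the
sublevel set `{t | F i t ≤ F i (x i)}` closed, so it is either `Iic s` with `F i s = F i (x i)`
or all of `ℝ`, in which case `F i (x i) = 1`. Either way the larger event has no more mass than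
the smaller one, so the two agree almost surely, and so do the events defining `H x` and
`C (F x)`.
-/

open MeasureTheory Set

namespace ProbabilityTheory

variable {ν : Measure ℝ} [IsProbabilityMeasure ν]

lemma measure_cdf_le_cdf_le_measure_Iic (hc : Continuous (cdf ν)) (x : ℝ) :
    ν {t | cdf ν t ≤ cdf ν x} ≤ ν (Iic x) := by
  set S := {t | cdf ν t ≤ cdf ν x}
  by_cases hS : BddAbove S
  · have hclosed : IsClosed S := isClosed_le hc continuous_const
    have hsS : sSup S ∈ S := hclosed.csSup_mem ⟨x, le_refl (cdf ν x)⟩ hS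
    calc ν S ≤ ν (Iic (sSup S)) := measure_mono fun t ht => le_csSup hS ht
      _ ≤ ν (Iic x) := by
        rw [← ofReal_cdf, ← ofReal_cdf]
        exact ENNReal.ofReal_le_ofReal hsS
  · have hbound : ∀ t, cdf ν t ≤ cdf ν x := fun t => by
      obtain ⟨s, hs, hts⟩ := not_bddAbove_iff.1 hS t
      exact ((cdf ν).mono hts.le).trans hs
    have hone : 1 ≤ cdf ν x := le_of_tendsto' (tendsto_cdf_atTop ν) hbound
    rw [← ofReal_cdf, le_antisymm (cdf_le_one ν x) hone, ENNReal.ofReal_one]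
    exact prob_le_one

lemma ae_cdf_le_cdf_iff (hc : Continuous (cdf ν)) (x : ℝ) :
    ∀ᵐ t ∂ν, cdf ν t ≤ cdf ν x ↔ t ≤ x := by
  have hsub : Iic x ⊆ {t | cdf ν t ≤ cdf ν x} := fun t ht => (cdf ν).mono ht
  have := ae_eq_of_subset_of_measure_ge hsub (measure_cdf_le_cdf_le_measure_Iic hc x)
    measurableSet_Iic.nullMeasurableSet (measure_ne_top ν _)
  filter_upwards [Filter.eventuallyEq_set.1 this] with t ht
  exact ht.symm

lemma cdf_map_apply {Ω : Type*} [MeasurableSpace Ω] {μ : Measure Ω} [IsProbabilityMeasure μ]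
    {Y : Ω → ℝ} (hY : Measurable Y) (x : ℝ) :
    cdf (μ.map Y) x = (μ {ω | Y ω ≤ x}).toReal := by
  have := Measure.isProbabilityMeasure_map (μ := μ) hY.aemeasurable
  rw [cdf_eq_real, measureReal_def, Measure.map_apply hY measurableSet_Iic]
  rfl

lemma ae_cdf_comp_le_iff {Ω : Type*} [MeasurableSpace Ω] {μ : Measure Ω} [IsProbabilityMeasure μ]
    {Y : Ω → ℝ} (hY : Measurable Y) (hc : Continuous (cdf (μ.map Y))) (x : ℝ) :
    ∀ᵐ ω ∂μ, cdf (μ.map Y) (Y ω) ≤ cdf (μ.map Y) x ↔ Y ω ≤ x := by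
  have := Measure.isProbabilityMeasure_map (μ := μ) hY.aemeasurable
  exact ae_of_ae_map hY.aemeasurable (ae_cdf_le_cdf_iff hc x)

end ProbabilityTheory

open ProbabilityTheory

/-- Sklar's theorem (existence, continuous margins): the joint CDF `H` factors through
the copula `C` of the probability-integral-transformed vector. -/
theorem sklar_existence_continuous_margins
    {Ω : Type*} [MeasurableSpace Ω] (μ : Measure Ω) [IsProbabilityMeasure μ]
    (d : ℕ) (X : Ω → Fin d → ℝ) (hX : Measurable X)
    (F : Fin d → ℝ → ℝ) (hF : ∀ i x, F i x = (μ {ω | X ω i ≤ x}).toReal)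
    (hFcont : ∀ i, Continuous (F i))
    (H : (Fin d → ℝ) → ℝ) (hH : ∀ x, H x = (μ {ω | ∀ i, X ω i ≤ x i}).toReal)
    (C : (Fin d → ℝ) → ℝ)
    (hC : ∀ u, C u = (μ {ω | ∀ i, F i (X ω i) ≤ u i}).toReal) :
    ∀ x : Fin d → ℝ, H x = C (fun i => F i (x i)) := by
  intro x
  have hXi (i : Fin d) : Measurable (X · i) := (measurable_pi_apply i).comp hX
  have hF_cdf (i : Fin d) : F i = cdf (μ.map (X · i)) :=
    funext fun t => (hF i t).trans (cdf_map_apply (hXi i) t).symm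
  have hiff : ∀ᵐ ω ∂μ, ∀ i, F i (X ω i) ≤ F i (x i) ↔ X ω i ≤ x i := by
    refine ae_all_iff.2 fun i => ?_
    rw [hF_cdf i]
    exact ae_cdf_comp_le_iff (hXi i) (hF_cdf i ▸ hFcont i) (x i)
  rw [hH, hC]
  congr 1
  refine measure_congr (Filter.eventuallyEq_set.2 ?_)
  filter_upwards [hiff] with ω hω
  exact forall_congr' fun i => (hω i).symm
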